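/- arXiv:2204.12856 — 2 statements merged into one kernel-verified Lean document; each statement's English description precedes it below -/
import Mathlib

section
/- Let G be a finite simple graph whose vertex set V has even cardinality n, let R be a set of edges of G with |R| = n/2 (the red edges), and let ℓ ∈ ℕ with ℓ ≤ n/2. Let p and p′ be two new candidates and let C = V ∪ {p, p′}. Let the registered multiset X consist of one 2-Approval vote {a, b} for each edge {a, b} ∈ R, together with one vote {p, p′}; let the unregistered multiset Y consist of one 2-Approval vote {a, b} for each edge {a, b} of G not in R. Then G has a perfect matching containing exactly ℓ edges of R if and only if there exist submultisets X′ of X and Y′ of Y with |X′| = |Y′| = n/2 − ℓ such that p is a 2-Approval winner of the multiset (X − X′) + Y′. -/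
/-- The 2-Approval score of candidate `c`: the number of votes containing `c`. -/
def apScore {C : Type} [DecidableEq C] (V : Multiset (Sym2 C)) (c : C) : ℕ :=
  Multiset.card (V.filter (fun v => c ∈ v))

/-- `c` is a 2-Approval winner of `V` if its score is at least that of every candidate. -/
def apWinner {C : Type} [Fintype C] [DecidableEq C] (V : Multiset (Sym2 C)) (c : C) : Prop :=
  ∀ d : C, apScore V d ≤ apScore V c

/-- The candidate set `C = V ∪ {p, p′}`, with `p = Sum.inr false` and `p′ = Sum.inr true`. -/
abbrev Cand (V : Type) : Type := V ⊕ Bool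

/-- The registered votes: one vote `{a, b}` per red edge `{a, b} ∈ R`, plus one vote
`{p, p′}`. -/
def Xreg {V : Type} [DecidableEq V] (R : Finset (Sym2 V)) : Multiset (Sym2 (Cand V)) :=
  R.val.map (Sym2.map Sum.inl) + {s(Sum.inr false, Sum.inr true)}

/-- The unregistered votes: one vote `{a, b}` per nonred edge `{a, b}` of `G`. -/
def Yunreg {V : Type} [Fintype V] [DecidableEq V] (G : SimpleGraph V) [DecidableRel G.Adj]
    (R : Finset (Sym2 V)) : Multiset (Sym2 (Cand V)) :=
  (G.edgeFinset \ R).val.map (Sym2.map Sum.inl)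

/-!
Replacing the registered votes of `S ⊆ R` by the unregistered votes of a set `T` of nonred
edges leaves exactly the votes of `M = (R \ S) ∪ T` together with `{p, p′}`. A winning
replacement never removes `{p, p′}`: otherwise `p` scores `0`, yet the election is nonempty, so
some candidate scores more. Hence `p` scores `1` and wins iff every vertex lies on at most one
edge of `M`. Since `|M| = n/2`, double counting upgrades "at most one" to "exactly one", so `M`
is a perfect matching, and its red edges are the `n/2 − |S| = ℓ` edges of `R \ S`.
-/

open Finset

section apScore

variable {C : Type} [DecidableEq C]

theorem apScore_add (A B : Multiset (Sym2 C)) (c : C) :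
    apScore (A + B) c = apScore A c + apScore B c := by
  simp only [apScore, Multiset.filter_add, Multiset.card_add]

theorem apScore_mono {A B : Multiset (Sym2 C)} (h : A ≤ B) (c : C) :
    apScore A c ≤ apScore B c :=
  Multiset.card_le_card (Multiset.filter_le_filter _ h)

theorem apScore_cons (e : Sym2 C) (N : Multiset (Sym2 C)) (c : C) :
    apScore (e ::ₘ N) c = apScore N c + if c ∈ e then 1 else 0 := by
  by_cases hc : c ∈ e <;> simp [apScore, hc, add_comm]

theorem apScore_singleton (e : Sym2 C) (c : C) : apScore {e} c = if c ∈ e then 1 else 0 := by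
  simpa [apScore] using apScore_cons e 0 c

theorem sum_apScore_eq_two_mul_card [Fintype C] {N : Multiset (Sym2 C)}
    (hN : ∀ e ∈ N, ¬ e.IsDiag) :
    ∑ c, apScore N c = 2 * Multiset.card N := by
  induction N using Multiset.induction with
  | empty => simp [apScore]
  | cons e N ih =>
    have he : ∑ c : C, (if c ∈ e then 1 else 0) = 2 := by
      rw [Finset.sum_boole, Nat.cast_id,
        ← Sym2.card_toFinset_of_not_isDiag e (hN e (Multiset.mem_cons_self e N))]
      congr 1; ext; simp [Sym2.mem_toFinset]
    simp only [apScore_cons, Finset.sum_add_distrib, he, Multiset.card_cons,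
      ih fun e' he' => hN e' (Multiset.mem_cons_of_mem he')]
    ring

theorem forall_apScore_eq_one_iff [Fintype C] {N : Multiset (Sym2 C)}
    (hN : ∀ e ∈ N, ¬ e.IsDiag) :
    (∀ c, apScore N c = 1) ↔ 2 * Multiset.card N = Fintype.card C ∧ ∀ c, apScore N c ≤ 1 := by
  rw [← sum_apScore_eq_two_mul_card hN]
  refine ⟨fun h => ⟨by simp [h], fun c => (h c).le⟩, fun ⟨hsum, hle⟩ c => ?_⟩
  rw [← Finset.card_univ, Finset.card_eq_sum_ones] at hsum
  exact (Finset.sum_eq_sum_iff_of_le fun c _ => hle c).1 hsum c (mem_univ c)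

theorem apWinner.apScore_pos [Fintype C] {W : Multiset (Sym2 C)} {c : C} (h : apWinner W c)
    (hW : W ≠ 0) : 0 < apScore W c := by
  obtain ⟨e, he⟩ := Multiset.exists_mem_of_ne_zero hW
  induction e using Sym2.ind with
  | _ a b =>
    have : 0 < apScore W a := by
      rw [apScore, ← Multiset.countP_eq_card_filter]
      exact Multiset.countP_pos_of_mem he (Sym2.mem_mk_left a b)
    exact this.trans_le (h a)

end apScore

section map

variable {C D : Type} [DecidableEq D]

theorem apScore_map_of_injective [DecidableEq C] {f : C → D}
    (hf : Function.Injective f) (N : Multiset (Sym2 C)) (c : C) :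
    apScore (N.map (Sym2.map f)) (f c) = apScore N c := by
  simp only [apScore, Multiset.filter_map, Multiset.card_map]
  congr 1
  refine Multiset.filter_congr fun e _ => ⟨fun h => ?_, fun h => Sym2.mem_map.2 ⟨c, h, rfl⟩⟩
  obtain ⟨a, ha, hac⟩ := Sym2.mem_map.1 h
  exact hf hac ▸ ha

theorem apScore_map_eq_zero {f : C → D} {d : D}
    (hd : d ∉ Set.range f) (N : Multiset (Sym2 C)) : apScore (N.map (Sym2.map f)) d = 0 := by
  simp only [apScore, Multiset.card_eq_zero, Multiset.filter_eq_nil, Multiset.mem_map]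
  rintro _ ⟨e, -, rfl⟩ hde
  obtain ⟨c, -, rfl⟩ := Sym2.mem_map.1 hde
  exact hd ⟨c, rfl⟩

end map

theorem Finset.exists_subset_eq_map_val_of_le {α β : Type} {f : α ↪ β} {s : Finset α}
    {X : Multiset β} (h : X ≤ (s.map f).val) : ∃ t ⊆ s, X = (t.map f).val := by
  let X' : Finset β := ⟨X, Multiset.nodup_of_le h (s.map f).nodup⟩
  obtain ⟨t, hts, ht⟩ := Finset.subset_map_iff.1 (Finset.val_le_iff.1 h : X' ⊆ s.map f)
  exact ⟨t, hts, congrArg Finset.val ht⟩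

theorem SimpleGraph.not_isDiag_of_subset_edgeFinset {V : Type} [Fintype V] {G : SimpleGraph V}
    [DecidableRel G.Adj] {M : Finset (Sym2 V)} (hM : M ⊆ G.edgeFinset) :
    ∀ e ∈ M.val, ¬ e.IsDiag :=
  fun _ he => G.not_isDiag_of_mem_edgeFinset (hM he)

section Reduction

variable {V : Type} [DecidableEq V]

abbrev inlVote : Sym2 V ↪ Sym2 (Cand V) := Function.Embedding.inl.sym2Map

local notation "pp" => (s(Sum.inr false, Sum.inr true) : Sym2 (Cand _))

theorem Xreg_eq_add (R : Finset (Sym2 V)) : Xreg R = (R.map inlVote).val + {pp} :=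
  rfl

theorem Xreg_eq_cons (R : Finset (Sym2 V)) : Xreg R = pp ::ₘ (R.map inlVote).val := by
  rw [Xreg_eq_add, add_comm, Multiset.singleton_add]

theorem Yunreg_eq [Fintype V] (G : SimpleGraph V) [DecidableRel G.Adj] (R : Finset (Sym2 V)) :
    Yunreg G R = ((G.edgeFinset \ R).map inlVote).val :=
  rfl

theorem Xreg_sub_map_add_map {R S T : Finset (Sym2 V)} (hS : S ⊆ R) (hT : Disjoint R T) :
    Xreg R - (S.map inlVote).val + (T.map inlVote).val =
      (((R \ S) ∪ T).map inlVote).val + {pp} := by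
  have hTS : Disjoint (R \ S) T := disjoint_of_subset_left sdiff_subset hT
  rw [Xreg_eq_add, ← tsub_add_eq_add_tsub (Finset.val_le_iff.2 (map_subset_map.2 hS)),
    add_right_comm, ← sdiff_val, ← Finset.map_sdiff, Finset.map_union,
    ← disjUnion_eq_union _ _ (by simpa using hTS)]
  rfl

theorem apScore_map_inlVote_inl (M : Finset (Sym2 V)) (v : V) :
    apScore (M.map inlVote).val (Sum.inl v) = apScore M.val v :=
  apScore_map_of_injective Sum.inl_injective M.val v

theorem apScore_map_inlVote_inr (M : Finset (Sym2 V)) (b : Bool) :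
    apScore (M.map inlVote).val (Sum.inr b) = 0 :=
  apScore_map_eq_zero (by simp) M.val

theorem apWinner_map_add_iff [Fintype V] (M : Finset (Sym2 V)) :
    apWinner ((M.map inlVote).val + {pp}) (Sum.inr false) ↔ ∀ v, apScore M.val v ≤ 1 := by
  simp only [apWinner, Sum.forall, apScore_add, apScore_map_inlVote_inl,
    apScore_map_inlVote_inr, apScore_singleton]
  simp

theorem pp_notMem_of_apWinner [Fintype V] {R T : Finset (Sym2 V)}
    {X : Multiset (Sym2 (Cand V))}    (hX : X ≤ Xreg R) (hcard : Multiset.card X ≤ R.card)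
    (hwin : apWinner (Xreg R - X + (T.map inlVote).val) (Sum.inr false)) : pp ∉ X := by
  intro hpp
  have hpos : 0 < apScore (Xreg R - X + (T.map inlVote).val) (Sum.inr false) := by
    refine hwin.apScore_pos (Multiset.card_pos.1 ?_)
    rw [Multiset.card_add, Multiset.card_sub hX, Xreg_eq_cons, Multiset.card_cons,
      Finset.card_val, Finset.card_map]
    omega
  obtain ⟨X', rfl⟩ := Multiset.exists_cons_of_mem hpp
  rw [Xreg_eq_cons, Multiset.sub_cons, Multiset.erase_cons_head] at hpos
  have hzero := apScore_mono (add_le_add_left tsub_le_self _ :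
    (R.map inlVote).val - X' + (T.map inlVote).val ≤ (R.map inlVote).val + (T.map inlVote).val)
    (Sum.inr false)
  simp only [apScore_add, apScore_map_inlVote_inr] at hpos hzero
  omega

variable [Fintype V] {G : SimpleGraph V} [DecidableRel G.Adj] {R : Finset (Sym2 V)} {m : ℕ}

theorem exists_replacement_of_perfectMatching (hV : Fintype.card V = m + m) (hR : R.card = m)
    {M : Finset (Sym2 V)} (hME : M ⊆ G.edgeFinset) (hPM : ∀ v, apScore M.val v = 1) :
    ∃ X' ≤ Xreg R, ∃ Y' ≤ Yunreg G R,
      Multiset.card X' = m - (M ∩ R).card ∧ Multiset.card Y' = m - (M ∩ R).card ∧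
      apWinner (Xreg R - X' + Y') (Sum.inr false) := by
  have hMcard : M.card = m := by
    have := ((forall_apScore_eq_one_iff (G.not_isDiag_of_subset_edgeFinset hME)).1 hPM).1
    rw [Finset.card_val] at this
    omega
  have hM : R \ (R \ M) ∪ M \ R = M := by
    ext e
    simp only [mem_union, mem_sdiff]
    tauto
  refine ⟨((R \ M).map inlVote).val, ?_, ((M \ R).map inlVote).val, ?_, ?_, ?_, ?_⟩
  · rw [Xreg_eq_add]
    exact (val_le_iff.2 (map_subset_map.2 sdiff_subset)).trans (Multiset.le_add_right _ _)
  · exact val_le_iff.2 (map_subset_map.2 (sdiff_subset_sdiff hME subset_rfl))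
  · rw [card_val, card_map, card_sdiff, hR]
  · rw [card_val, card_map, card_sdiff, inter_comm R M, hMcard]
  · rw [Xreg_sub_map_add_map sdiff_subset disjoint_sdiff, hM, apWinner_map_add_iff]
    exact fun v => (hPM v).le

theorem exists_perfectMatching_of_replacement (hV : Fintype.card V = m + m)
    (hRE : R ⊆ G.edgeFinset) (hR : R.card = m) {ℓ : ℕ} (hℓ : ℓ ≤ m)
    {X' Y' : Multiset (Sym2 (Cand V))} (hX' : X' ≤ Xreg R) (hY' : Y' ≤ Yunreg G R)
    (hXc : Multiset.card X' = m - ℓ) (hYc : Multiset.card Y' = m - ℓ)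
    (hwin : apWinner (Xreg R - X' + Y') (Sum.inr false)) :
    ∃ M ⊆ G.edgeFinset, (∀ v, apScore M.val v = 1) ∧ (M ∩ R).card = ℓ := by
  obtain ⟨T, hT, rfl⟩ := exists_subset_eq_map_val_of_le (Yunreg_eq G R ▸ hY')
  have hpp := pp_notMem_of_apWinner hX' (by omega) hwin
  rw [Xreg_eq_cons, Multiset.le_cons_of_notMem hpp] at hX'
  obtain ⟨S, hS, rfl⟩ := exists_subset_eq_map_val_of_le hX'
  have hRT : Disjoint R T := disjoint_of_subset_right hT disjoint_sdiff
  rw [Xreg_sub_map_add_map hS hRT, apWinner_map_add_iff] at hwin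
  rw [card_val, card_map] at hXc hYc
  have hME : R \ S ∪ T ⊆ G.edgeFinset :=
    union_subset (sdiff_subset.trans hRE) (hT.trans sdiff_subset)
  have hMcard : (R \ S ∪ T).card = m := by
    rw [card_union_of_disjoint (disjoint_of_subset_left sdiff_subset hRT),
      card_sdiff_of_subset hS]
    omega
  have hMR : (R \ S ∪ T) ∩ R = R \ S := by
    rw [union_inter_distrib_right, disjoint_iff_inter_eq_empty.1 hRT.symm, union_empty,
      inter_eq_left.2 sdiff_subset]
  refine ⟨R \ S ∪ T, hME, ?_, ?_⟩
  · refine (forall_apScore_eq_one_iff (G.not_isDiag_of_subset_edgeFinset hME)).2 ⟨?_, hwin⟩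
    rw [card_val, hMcard, hV]
    ring
  · rw [hMR, card_sdiff_of_subset hS]
    omega

end Reduction

/-- `G` has a perfect matching with exactly `ℓ` red edges iff `p` can be made
a 2-Approval winner by replacing exactly `n/2 − ℓ` registered votes with the same number of
unregistered votes. -/
theorem stmt2 {V : Type} [Fintype V] [DecidableEq V] (G : SimpleGraph V) [DecidableRel G.Adj]
    (hn : Even (Fintype.card V))
    (R : Finset (Sym2 V)) (hRE : R ⊆ G.edgeFinset) (hR : R.card = Fintype.card V / 2)
    (ℓ : ℕ) (hℓ : ℓ ≤ Fintype.card V / 2) :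
    (∃ M : Finset (Sym2 V), M ⊆ G.edgeFinset ∧
        (∀ v : V, (M.filter (fun e => v ∈ e)).card = 1) ∧
        (M ∩ R).card = ℓ)
    ↔ (∃ X' ≤ Xreg R, ∃ Y' ≤ Yunreg G R,
        Multiset.card X' = Fintype.card V / 2 - ℓ ∧
        Multiset.card Y' = Fintype.card V / 2 - ℓ ∧
        apWinner ((Xreg R - X') + Y') (Sum.inr false)) := by
  obtain ⟨m, hm⟩ := hn
  have hhalf : Fintype.card V / 2 = m := by omega
  rw [hhalf] at hR hℓ ⊢
  constructor
  · rintro ⟨M, hME, hPM, rfl⟩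
    exact exists_replacement_of_perfectMatching hm hR hME hPM
  · rintro ⟨X', hX', Y', hY', hXc, hYc, hwin⟩
    exact exists_perfectMatching_of_replacement hm hRE hR hℓ hX' hY' hXc hYc hwin
end

section
/- Let C be a finite candidate set with p ∈ C, let V and W be finite multisets of First-Last votes on C (the registered and unregistered voters), and let k ∈ ℕ. Suppose no vote in W has first component p, and suppose the number of votes in W whose last component is not p is at least k. Then there exists a submultiset W′ of W with |W′| = k such that p is a First-Last winner of V + W′, if and only if there exists such a submultiset W′ in which no vote has last component p. -/
/-- The First-Last score of candidate `c` in a multiset of First-Last votes: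
the number of votes ranking `c` first minus the number ranking `c` last. -/
def flScore {C : Type} [DecidableEq C] (V : Multiset (C × C)) (c : C) : ℤ :=
  ((V.filter (fun v => v.1 = c)).card : ℤ) - ((V.filter (fun v => v.2 = c)).card : ℤ)

/-- `c` is a First-Last winner of `V` if its score is at least that of every candidate. -/
def flWinner {C : Type} [Fintype C] [DecidableEq C] (V : Multiset (C × C)) (c : C) : Prop :=
  ∀ d : C, flScore V d ≤ flScore V c

lemma exists_sub {α : Type*} (s : Multiset α) (n : ℕ) (h : n ≤ Multiset.card s) :
    ∃ t ≤ s, Multiset.card t = n := by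
  have hpos : 0 < Multiset.card (s.powersetCard n) := by
    rw [Multiset.card_powersetCard]
    exact Nat.choose_pos h
  obtain ⟨t, ht⟩ := Multiset.card_pos_iff_exists_mem.mp hpos
  rw [Multiset.mem_powersetCard] at ht
  exact ⟨t, ht.1, ht.2⟩

lemma flScore_add {C : Type} [DecidableEq C] (A B : Multiset (C × C)) (c : C) :
    flScore (A + B) c = flScore A c + flScore B c := by
  simp [flScore, Multiset.filter_add]; ring

/-- if no unregistered vote ranks `p` first and at least `k` unregistered votes
do not rank `p` last, then `p` can be made a winner by adding exactly `k` unregistered votes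
iff it can be done adding only votes that do not rank `p` last. -/
theorem stmt12 {C : Type} [Fintype C] [DecidableEq C] (p : C)
    (V W : Multiset (C × C))
    (hV : ∀ v ∈ V, v.1 ≠ v.2) (hW : ∀ v ∈ W, v.1 ≠ v.2)
    (hWp : ∀ v ∈ W, v.1 ≠ p)
    (k : ℕ) (hk : k ≤ Multiset.card (W.filter (fun v => v.2 ≠ p))) :
    (∃ W' ≤ W, Multiset.card W' = k ∧ flWinner (V + W') p)
    ↔ (∃ W' ≤ W, Multiset.card W' = k ∧ (∀ v ∈ W', v.2 ≠ p) ∧ flWinner (V + W') p) := by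
  constructor
  · rintro ⟨W', hle, hcard, hwin⟩
    set A := W'.filter (fun v => v.2 ≠ p) with hAdef
    set B := W'.filter (fun v => v.2 = p) with hBdef
    have hsplit : B + A = W' := Multiset.filter_add_not _ W'
    set m := Multiset.card B with hmdef
    have hcardA : Multiset.card A + m = k := by
      have := congrArg Multiset.card hsplit
      simp [Multiset.card_add] at this
      omega
    have hAle : A ≤ W.filter (fun v => v.2 ≠ p) :=
      Multiset.filter_le_filter _ hle
    have hD : m ≤ Multiset.card (W.filter (fun v => v.2 ≠ p) - A) := by
      rw [Multiset.card_sub hAle]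
      omega
    obtain ⟨T, hTle, hTcard⟩ := exists_sub _ m hD
    have hTle' : T ≤ W.filter (fun v => v.2 ≠ p) :=
      le_trans hTle (Multiset.sub_le_self _ _)
    have hW''le : A + T ≤ W := by
      calc A + T ≤ A + (W.filter (fun v => v.2 ≠ p) - A) :=
            add_le_add le_rfl hTle
        _ = W.filter (fun v => v.2 ≠ p) := add_tsub_cancel_of_le hAle
        _ ≤ W := Multiset.filter_le _ _
    refine ⟨A + T, hW''le, ?_, ?_, ?_⟩
    · simp [Multiset.card_add, hTcard]; omega
    · intro v hv
      rcases Multiset.mem_add.mp hv with h | h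
      · exact (Multiset.mem_filter.mp h).2
      · exact (Multiset.mem_filter.mp (Multiset.mem_of_le hTle' h)).2
    · intro d
      by_cases hd : d = p
      · subst hd; exact le_refl _
      -- score facts
      have hBp : flScore B p = -(m : ℤ) := by
        have h1 : B.filter (fun v => v.1 = p) = 0 := by
          rw [Multiset.filter_eq_nil]
          intro v hv
          exact hWp v (Multiset.mem_of_le hle (Multiset.mem_of_le (Multiset.filter_le _ _) hv))
        have h2 : B.filter (fun v => v.2 = p) = B := by
          rw [Multiset.filter_eq_self]
          intro v hv
          exact (Multiset.mem_filter.mp hv).2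
        simp [flScore, h1, h2, hmdef]
      have hTp : flScore T p = 0 := by
        have h1 : T.filter (fun v => v.1 = p) = 0 := by
          rw [Multiset.filter_eq_nil]
          intro v hv
          exact hWp v (Multiset.mem_of_le (le_trans hTle' (Multiset.filter_le _ _)) hv)
        have h2 : T.filter (fun v => v.2 = p) = 0 := by
          rw [Multiset.filter_eq_nil]
          intro v hv
          exact (Multiset.mem_filter.mp (Multiset.mem_of_le hTle' hv)).2
        simp [flScore, h1, h2]
      have hTd : flScore T d ≤ (m : ℤ) := by
        have h1 : Multiset.card (T.filter (fun v => v.1 = d)) ≤ m := by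
          rw [← hTcard]; exact Multiset.card_le_card (Multiset.filter_le _ _)
        have : (0:ℤ) ≤ Multiset.card (T.filter (fun v => v.2 = d)) := by positivity
        simp only [flScore]
        omega
      have hBd : 0 ≤ flScore B d := by
        have h2 : B.filter (fun v => v.2 = d) = 0 := by
          rw [Multiset.filter_eq_nil]
          intro v hv
          have := (Multiset.mem_filter.mp hv).2
          simp [this, hd]
          exact fun h => hd (h ▸ rfl)
        simp [flScore, h2]
      have hw := hwin d
      have e1 : flScore (V + W') d = flScore V d + flScore B d + flScore A d := by
        rw [← hsplit, flScore_add, flScore_add]; ring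
      have e2 : flScore (V + W') p = flScore V p + flScore B p + flScore A p := by
        rw [← hsplit, flScore_add, flScore_add]; ring
      have e3 : flScore (V + (A + T)) d = flScore V d + flScore A d + flScore T d := by
        rw [flScore_add, flScore_add]; ring
      have e4 : flScore (V + (A + T)) p = flScore V p + flScore A p + flScore T p := by
        rw [flScore_add, flScore_add]; ring
      rw [e1, e2] at hw
      rw [e3, e4, hBp] at *
      linarith
  · rintro ⟨W', hle, hcard, _, hwin⟩
    exact ⟨W', hle, hcard, hwin⟩
end
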